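/- arXiv:1911.12737 — 2 statements merged into one kernel-verified Lean document; each statement's English description precedes it below -/
import Mathlib

section
/- The First set characterizes the kinds that can start a recognised sequence: for every syntax s : Syntax A and kind k, k ∈ First s if and only if there exist a token t with kind t = k, a token sequence ts and a value v : A with Matches s (t :: ts) v. -/
set_option autoImplicit false

/-- Context-free syntaxes (value-aware context-free expressions). -/
inductive Syn (Token Kind : Type) (Var : Type → Type) : Type → Type 1 where
  | elem (k : Kind) : Syn Token Kind Var Token
  | fail {A : Type} : Syn Token Kind Var A
  | eps {A : Type} (v : A) : Syn Token Kind Var A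
  | disj {A : Type} (s₁ s₂ : Syn Token Kind Var A) : Syn Token Kind Var A
  | seqn {A B : Type} (s₁ : Syn Token Kind Var A) (s₂ : Syn Token Kind Var B) :
      Syn Token Kind Var (A × B)
  | map {A B : Type} (f : A → B) (s : Syn Token Kind Var A) : Syn Token Kind Var B
  | var {A : Type} (x : Var A) : Syn Token Kind Var A

section

variable {Token Kind : Type} {Var : Type → Type}
variable (kd : Token → Kind) (env : ∀ A : Type, Var A → Syn Token Kind Var A)

/-- Semantics of syntaxes. -/
inductive Matches : ∀ {A : Type}, Syn Token Kind Var A → List Token → A → Prop where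
  | elem {k : Kind} {t : Token} (h : kd t = k) : Matches (Syn.elem k) [t] t
  | eps {A : Type} (v : A) : Matches (Syn.eps v) [] v
  | disjL {A : Type} {s₁ s₂ : Syn Token Kind Var A} {ts : List Token} {v : A} :
      Matches s₁ ts v → Matches (Syn.disj s₁ s₂) ts v
  | disjR {A : Type} {s₁ s₂ : Syn Token Kind Var A} {ts : List Token} {v : A} :
      Matches s₂ ts v → Matches (Syn.disj s₁ s₂) ts v
  | seqn {A B : Type} {s₁ : Syn Token Kind Var A} {s₂ : Syn Token Kind Var B}
      {ts₁ ts₂ : List Token} {v₁ : A} {v₂ : B} :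
      Matches s₁ ts₁ v₁ → Matches s₂ ts₂ v₂ →
      Matches (Syn.seqn s₁ s₂) (ts₁ ++ ts₂) (v₁, v₂)
  | map {A B : Type} (f : A → B) {s : Syn Token Kind Var A} {ts : List Token} {v : A} :
      Matches s ts v → Matches (Syn.map f s) ts (f v)
  | var {A : Type} (x : Var A) {ts : List Token} {v : A} :
      Matches (env A x) ts v → Matches (Syn.var x) ts v

/-- Productivity. -/
inductive Productive : ∀ {A : Type}, Syn Token Kind Var A → Prop where
  | eps {A : Type} (v : A) : Productive (Syn.eps v)
  | elem (k : Kind) : Productive (Syn.elem k)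
  | disjL {A : Type} {s₁ s₂ : Syn Token Kind Var A} :
      Productive s₁ → Productive (Syn.disj s₁ s₂)
  | disjR {A : Type} {s₁ s₂ : Syn Token Kind Var A} :
      Productive s₂ → Productive (Syn.disj s₁ s₂)
  | seqn {A B : Type} {s₁ : Syn Token Kind Var A} {s₂ : Syn Token Kind Var B} :
      Productive s₁ → Productive s₂ → Productive (Syn.seqn s₁ s₂)
  | map {A B : Type} (f : A → B) {s : Syn Token Kind Var A} :
      Productive s → Productive (Syn.map f s)
  | var {A : Type} (x : Var A) : Productive (env A x) → Productive (Syn.var x)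

/-- Nullability, with associated value. -/
inductive Nullable : ∀ {A : Type}, Syn Token Kind Var A → A → Prop where
  | eps {A : Type} (v : A) : Nullable (Syn.eps v) v
  | disjL {A : Type} {s₁ s₂ : Syn Token Kind Var A} {v : A} :
      Nullable s₁ v → Nullable (Syn.disj s₁ s₂) v
  | disjR {A : Type} {s₁ s₂ : Syn Token Kind Var A} {v : A} :
      Nullable s₂ v → Nullable (Syn.disj s₁ s₂) v
  | seqn {A B : Type} {s₁ : Syn Token Kind Var A} {s₂ : Syn Token Kind Var B} {v₁ : A} {v₂ : B} :
      Nullable s₁ v₁ → Nullable s₂ v₂ → Nullable (Syn.seqn s₁ s₂) (v₁, v₂)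
  | map {A B : Type} (f : A → B) {s : Syn Token Kind Var A} {v : A} :
      Nullable s v → Nullable (Syn.map f s) (f v)
  | var {A : Type} (x : Var A) {v : A} : Nullable (env A x) v → Nullable (Syn.var x) v

/-- First sets: `InFirst env k s` means `k ∈ First s`. -/
inductive InFirst : ∀ {A : Type}, Kind → Syn Token Kind Var A → Prop where
  | elem (k : Kind) : InFirst k (Syn.elem k)
  | disjL {A : Type} {k : Kind} {s₁ s₂ : Syn Token Kind Var A} :
      InFirst k s₁ → InFirst k (Syn.disj s₁ s₂)
  | disjR {A : Type} {k : Kind} {s₁ s₂ : Syn Token Kind Var A} :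
      InFirst k s₂ → InFirst k (Syn.disj s₁ s₂)
  | seqnL {A B : Type} {k : Kind} {s₁ : Syn Token Kind Var A} {s₂ : Syn Token Kind Var B} :
      InFirst k s₁ → Productive env s₂ → InFirst k (Syn.seqn s₁ s₂)
  | seqnR {A B : Type} {k : Kind} {s₁ : Syn Token Kind Var A} {s₂ : Syn Token Kind Var B}
      {v : A} : Nullable env s₁ v → InFirst k s₂ → InFirst k (Syn.seqn s₁ s₂)
  | map {A B : Type} {k : Kind} (f : A → B) {s : Syn Token Kind Var A} :
      InFirst k s → InFirst k (Syn.map f s)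
  | var {A : Type} {k : Kind} (x : Var A) : InFirst k (env A x) → InFirst k (Syn.var x)

/-- Should-not-follow sets: `InSNF env k s` means `k ∈ ShouldNotFollow s`. -/
inductive InSNF : ∀ {A : Type}, Kind → Syn Token Kind Var A → Prop where
  | disjL {A : Type} {k : Kind} {s₁ s₂ : Syn Token Kind Var A} :
      InSNF k s₁ → InSNF k (Syn.disj s₁ s₂)
  | disjR {A : Type} {k : Kind} {s₁ s₂ : Syn Token Kind Var A} :
      InSNF k s₂ → InSNF k (Syn.disj s₁ s₂)
  | disjFN {A : Type} {k : Kind} {s₁ s₂ : Syn Token Kind Var A} {v : A} :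
      InFirst env k s₁ → Nullable env s₂ v → InSNF k (Syn.disj s₁ s₂)
  | disjNF {A : Type} {k : Kind} {s₁ s₂ : Syn Token Kind Var A} {v : A} :
      Nullable env s₁ v → InFirst env k s₂ → InSNF k (Syn.disj s₁ s₂)
  | seqnL {A B : Type} {k : Kind} {s₁ : Syn Token Kind Var A} {s₂ : Syn Token Kind Var B}
      {v : B} : InSNF k s₁ → Nullable env s₂ v → InSNF k (Syn.seqn s₁ s₂)
  | seqnR {A B : Type} {k : Kind} {s₁ : Syn Token Kind Var A} {s₂ : Syn Token Kind Var B} :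
      Productive env s₁ → InSNF k s₂ → InSNF k (Syn.seqn s₁ s₂)
  | map {A B : Type} {k : Kind} (f : A → B) {s : Syn Token Kind Var A} :
      InSNF k s → InSNF k (Syn.map f s)
  | var {A : Type} {k : Kind} (x : Var A) : InSNF k (env A x) → InSNF k (Syn.var x)

/-- LL(1) conflicts. A syntax `s` is LL(1) iff `¬ HasConflict env s`. -/
inductive HasConflict : ∀ {A : Type}, Syn Token Kind Var A → Prop where
  | disjNN {A : Type} {s₁ s₂ : Syn Token Kind Var A} {v₁ v₂ : A} :
      Nullable env s₁ v₁ → Nullable env s₂ v₂ → HasConflict (Syn.disj s₁ s₂)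
  | disjFF {A : Type} {s₁ s₂ : Syn Token Kind Var A} {k : Kind} :
      InFirst env k s₁ → InFirst env k s₂ → HasConflict (Syn.disj s₁ s₂)
  | disjL {A : Type} {s₁ s₂ : Syn Token Kind Var A} :
      HasConflict s₁ → HasConflict (Syn.disj s₁ s₂)
  | disjR {A : Type} {s₁ s₂ : Syn Token Kind Var A} :
      HasConflict s₂ → HasConflict (Syn.disj s₁ s₂)
  | seqnSF {A B : Type} {s₁ : Syn Token Kind Var A} {s₂ : Syn Token Kind Var B} {k : Kind} :
      InSNF env k s₁ → InFirst env k s₂ → HasConflict (Syn.seqn s₁ s₂)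
  | seqnL {A B : Type} {s₁ : Syn Token Kind Var A} {s₂ : Syn Token Kind Var B} :
      HasConflict s₁ → HasConflict (Syn.seqn s₁ s₂)
  | seqnR {A B : Type} {s₁ : Syn Token Kind Var A} {s₂ : Syn Token Kind Var B} :
      HasConflict s₂ → HasConflict (Syn.seqn s₁ s₂)
  | map {A B : Type} (f : A → B) {s : Syn Token Kind Var A} :
      HasConflict s → HasConflict (Syn.map f s)
  | var {A : Type} (x : Var A) : HasConflict (env A x) → HasConflict (Syn.var x)

end

/-- Layers of a context, with above type `A` and below type `B`. -/
inductive Layer (Token Kind : Type) (Var : Type → Type) : Type → Type → Type 1 where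
  | apply {A B : Type} (f : A → B) : Layer Token Kind Var A B
  | prepend {A C : Type} (v : C) : Layer Token Kind Var A (C × A)
  | followBy {A C : Type} (s : Syn Token Kind Var C) : Layer Token Kind Var A (A × C)

/-- Type-aligned contexts (stacks of layers). -/
inductive Ctx (Token Kind : Type) (Var : Type → Type) : Type → Type → Type 1 where
  | nil {A : Type} : Ctx Token Kind Var A A
  | cons {A B C : Type} (l : Layer Token Kind Var A B) (c : Ctx Token Kind Var B C) :
      Ctx Token Kind Var A C

section

variable {Token Kind : Type} {Var : Type → Type}

def Ctx.isNil : ∀ {A B : Type}, Ctx Token Kind Var A B → Bool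
  | _, _, Ctx.nil => true
  | _, _, Ctx.cons _ _ => false

/-- Unfocusing a focused syntax. -/
def unfocus : ∀ {A B : Type}, Syn Token Kind Var A → Ctx Token Kind Var A B →
    Syn Token Kind Var B
  | _, _, s, Ctx.nil => s
  | _, _, s, Ctx.cons (Layer.apply f) c => unfocus (Syn.map f s) c
  | _, _, s, Ctx.cons (Layer.prepend v) c => unfocus (Syn.seqn (Syn.eps v) s) c
  | _, _, s, Ctx.cons (Layer.followBy s') c => unfocus (Syn.seqn s s') c

/-- Focused syntaxes with below type `B`. -/
def Focused (Token Kind : Type) (Var : Type → Type) (B : Type) : Type 1 :=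
  (A : Type) × Syn Token Kind Var A × Ctx Token Kind Var A B

def unfocusF {B : Type} (fs : Focused Token Kind Var B) : Syn Token Kind Var B :=
  unfocus fs.2.1 fs.2.2

def focusF {A : Type} (s : Syn Token Kind Var A) : Focused Token Kind Var A :=
  ⟨A, s, Ctx.nil⟩

/-- Plugging a value into a context. -/
def plug : ∀ {A B : Type}, A → Ctx Token Kind Var A B → Focused Token Kind Var B
  | A, _, v, Ctx.nil => ⟨A, Syn.eps v, Ctx.nil⟩
  | _, _, v, Ctx.cons (Layer.apply f) c => plug (f v) c
  | _, _, v, Ctx.cons (Layer.prepend v') c => plug (v', v) c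
  | _, _, v, Ctx.cons (Layer.followBy s) c => ⟨_, s, Ctx.cons (Layer.prepend v) c⟩

end

section

variable {Token Kind : Type} {Var : Type → Type}
variable (kd : Token → Kind) (env : ∀ A : Type, Var A → Syn Token Kind Var A)

lemma matches_nil_iff_nullable {A : Type} {s : Syn Token Kind Var A} {v : A} :
    Matches kd env s [] v ↔ Nullable env s v := by
  constructor
  · intro h
    generalize hts : ([] : List Token) = ts at h
    induction h with
    | elem _ => cases hts
    | eps v => exact Nullable.eps v
    | disjL _ ih => exact Nullable.disjL (ih hts)
    | disjR _ ih => exact Nullable.disjR (ih hts)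
    | seqn _ _ ih₁ ih₂ =>
        obtain ⟨h₁, h₂⟩ := List.append_eq_nil_iff.mp hts.symm
        exact Nullable.seqn (ih₁ h₁.symm) (ih₂ h₂.symm)
    | map f _ ih => exact Nullable.map f (ih hts)
    | var x _ ih => exact Nullable.var x (ih hts)
  · intro h
    induction h with
    | eps v => exact Matches.eps v
    | disjL _ ih => exact Matches.disjL ih
    | disjR _ ih => exact Matches.disjR ih
    | seqn _ _ ih₁ ih₂ => exact Matches.seqn ih₁ ih₂
    | map f _ ih => exact Matches.map f ih
    | var x _ ih => exact Matches.var x ih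

lemma Matches.productive {A : Type} {s : Syn Token Kind Var A} {ts : List Token} {v : A}
    (h : Matches kd env s ts v) : Productive env s := by
  induction h with
  | elem _ => exact Productive.elem _
  | eps v => exact Productive.eps v
  | disjL _ ih => exact Productive.disjL ih
  | disjR _ ih => exact Productive.disjR ih
  | seqn _ _ ih₁ ih₂ => exact Productive.seqn ih₁ ih₂
  | map f _ ih => exact Productive.map f ih
  | var x _ ih => exact Productive.var x ih

lemma Productive.exists_matches (hkinds : ∀ k : Kind, ∃ t : Token, kd t = k)
    {A : Type} {s : Syn Token Kind Var A} (h : Productive env s) :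
    ∃ ts v, Matches kd env s ts v := by
  induction h with
  | eps v => exact ⟨[], v, Matches.eps v⟩
  | elem k =>
      obtain ⟨t, ht⟩ := hkinds k
      exact ⟨[t], t, Matches.elem ht⟩
  | disjL _ ih =>
      obtain ⟨ts, v, hm⟩ := ih
      exact ⟨ts, v, Matches.disjL hm⟩
  | disjR _ ih =>
      obtain ⟨ts, v, hm⟩ := ih
      exact ⟨ts, v, Matches.disjR hm⟩
  | seqn _ _ ih₁ ih₂ =>
      obtain ⟨ts₁, v₁, hm₁⟩ := ih₁
      obtain ⟨ts₂, v₂, hm₂⟩ := ih₂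
      exact ⟨ts₁ ++ ts₂, (v₁, v₂), Matches.seqn hm₁ hm₂⟩
  | map f _ ih =>
      obtain ⟨ts, v, hm⟩ := ih
      exact ⟨ts, f v, Matches.map f hm⟩
  | var x _ ih =>
      obtain ⟨ts, v, hm⟩ := ih
      exact ⟨ts, v, Matches.var x hm⟩

lemma InFirst.exists_matches_cons (hkinds : ∀ k : Kind, ∃ t : Token, kd t = k)
    {A : Type} {s : Syn Token Kind Var A} {k : Kind} (h : InFirst env k s) :
    ∃ (t : Token) (ts : List Token) (v : A), kd t = k ∧ Matches kd env s (t :: ts) v := by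
  induction h with
  | elem k =>
      obtain ⟨t, ht⟩ := hkinds k
      exact ⟨t, [], t, ht, Matches.elem ht⟩
  | disjL _ ih =>
      obtain ⟨t, ts, v, ht, hm⟩ := ih
      exact ⟨t, ts, v, ht, Matches.disjL hm⟩
  | disjR _ ih =>
      obtain ⟨t, ts, v, ht, hm⟩ := ih
      exact ⟨t, ts, v, ht, Matches.disjR hm⟩
  | seqnL _ hs₂ ih =>
      obtain ⟨t, ts, v, ht, hm⟩ := ih
      obtain ⟨ts₂, v₂, hm₂⟩ := hs₂.exists_matches kd env hkinds
      exact ⟨t, ts ++ ts₂, (v, v₂), ht, Matches.seqn hm hm₂⟩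
  | seqnR hs₁ _ ih =>
      obtain ⟨t, ts, v, ht, hm⟩ := ih
      exact ⟨t, ts, (_, v), ht, Matches.seqn ((matches_nil_iff_nullable kd env).mpr hs₁) hm⟩
  | map f _ ih =>
      obtain ⟨t, ts, v, ht, hm⟩ := ih
      exact ⟨t, ts, f v, ht, Matches.map f hm⟩
  | var x _ ih =>
      obtain ⟨t, ts, v, ht, hm⟩ := ih
      exact ⟨t, ts, v, ht, Matches.var x hm⟩

lemma Matches.inFirst_of_cons {A : Type} {s : Syn Token Kind Var A} {t : Token}
    {ts : List Token} {v : A} (h : Matches kd env s (t :: ts) v) : InFirst env (kd t) s := by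
  generalize hts : t :: ts = us at h
  induction h generalizing ts with
  | elem hk =>
      cases hts
      rw [hk]
      exact InFirst.elem _
  | eps v => cases hts
  | disjL _ ih => exact InFirst.disjL (ih hts)
  | disjR _ ih => exact InFirst.disjR (ih hts)
  | @seqn _ _ _ _ ts₁ _ _ _ hm₁ hm₂ ih₁ ih₂ =>
      cases ts₁ with
      | nil => exact InFirst.seqnR ((matches_nil_iff_nullable kd env).mp hm₁) (ih₂ hts)
      | cons t₁ ts₁ =>
          obtain ⟨rfl, -⟩ := List.cons_eq_cons.mp hts
          exact InFirst.seqnL (ih₁ rfl) hm₂.productive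
  | map f _ ih => exact InFirst.map f (ih hts)
  | var x _ ih => exact InFirst.var x (ih hts)

theorem first_iff_starts
    (hkinds : ∀ k : Kind, ∃ t : Token, kd t = k)
    {A : Type} (s : Syn Token Kind Var A) (k : Kind) :
    InFirst env k s ↔
      ∃ (t : Token) (ts : List Token) (v : A), kd t = k ∧ Matches kd env s (t :: ts) v := by
  refine ⟨InFirst.exists_matches_cons kd env hkinds, ?_⟩
  rintro ⟨t, ts, v, rfl, hm⟩
  exact hm.inFirst_of_cons

end
end

section
/- Uniqueness of the nullable value for LL(1) syntaxes: for every syntax s : Syntax A with ¬HasConflict s and all values v₁, v₂ : A, if Nullable s v₁ and Nullable s v₂ then v₁ = v₂ (so the partial function nullable? returning the nullable value is well-defined on LL(1) syntaxes). -/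
set_option autoImplicit false

/-! Induct on one nullability derivation and invert the other. At a disjunction, two nullable branches would be an LL(1) conflict, so both derivations
go through the same branch; every other constructor determines its value from those of its parts. -/

section

variable {Token Kind : Type} {Var : Type → Type} {env : ∀ A : Type, Var A → Syn Token Kind Var A}

variable (env) in
/-- Inversion motive for `Nullable` at `seqn`: `cases` cannot invert there directly, since it would
have to solve the type equation `A × B = A' × B'`. -/
def NullableComponents : ∀ {A : Type}, Syn Token Kind Var A → A → Prop
  | _, Syn.seqn s₁ s₂, v => Nullable env s₁ v.1 ∧ Nullable env s₂ v.2
  | _, _, _ => True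

theorem Nullable.nullableComponents {A : Type} {s : Syn Token Kind Var A} {v : A}
    (h : Nullable env s v) : NullableComponents env s v := by
  cases h with
  | seqn h₁ h₂ => exact ⟨h₁, h₂⟩
  | _ => trivial

theorem nullable_seqn_iff {A B : Type} {s₁ : Syn Token Kind Var A} {s₂ : Syn Token Kind Var B}
    {v : A × B} : Nullable env (Syn.seqn s₁ s₂) v ↔ Nullable env s₁ v.1 ∧ Nullable env s₂ v.2 :=
  ⟨Nullable.nullableComponents, fun ⟨h₁, h₂⟩ => Nullable.seqn h₁ h₂⟩

theorem nullable_map_iff {A B : Type} {f : A → B} {s : Syn Token Kind Var A} {v : B} :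
    Nullable env (Syn.map f s) v ↔ ∃ w, Nullable env s w ∧ f w = v := by
  constructor
  · rintro ⟨⟩
    exact ⟨_, ‹_›, rfl⟩
  · rintro ⟨w, hw, rfl⟩
    exact Nullable.map f hw

end

section

variable {Token Kind : Type} {Var : Type → Type}
variable (kd : Token → Kind) (env : ∀ A : Type, Var A → Syn Token Kind Var A)

theorem nullable_value_unique
    {A : Type} (s : Syn Token Kind Var A) (hs : ¬ HasConflict env s)
    (v₁ v₂ : A) (h₁ : Nullable env s v₁) (h₂ : Nullable env s v₂) :
    v₁ = v₂ := by
  induction h₁ with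
  | eps => cases h₂; rfl
  | disjL h ih =>
    cases h₂ with
    | disjL h' => exact ih (mt .disjL hs) _ h'
    | disjR h' => exact absurd (.disjNN h h') hs
  | disjR h ih =>
    cases h₂ with
    | disjL h' => exact absurd (.disjNN h' h) hs
    | disjR h' => exact ih (mt .disjR hs) _ h'
  | seqn _ _ ih₁ ih₂ =>
    obtain ⟨h₂₁, h₂₂⟩ := nullable_seqn_iff.mp h₂
    exact Prod.ext (ih₁ (mt .seqnL hs) _ h₂₁) (ih₂ (mt .seqnR hs) _ h₂₂)
  | map f _ ih =>
    obtain ⟨w, hw, rfl⟩ := nullable_map_iff.mp h₂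
    exact congrArg f (ih (mt (.map f) hs) _ hw)
  | var x _ ih =>
    cases h₂ with
    | var _ h' => exact ih (mt (.var x) hs) _ h'

end
end
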